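/- arXiv:1805.07668 — 3 statements merged into one kernel-verified Lean document; each statement's English description precedes it below -/
import Mathlib

section
/- Let f ∈ K(z) be a rational function of degree d > 1 and g ∈ K(z) a rational function of degree > 0. Then limsup_{n→∞} (sup_{w∈P^1(K)} log [f^n(w), g(w)]_{P^1}) / (d^n + deg g) = 0, where f^n denotes the n-th iterate of f. (The limsup is ≤ 0 since the chordal metric is bounded by 1; the content is that it is ≥ 0.) -/
open scoped Classical

open Polynomial Filter MeasureTheory Topology

set_option linter.unusedSectionVars false
set_option maxHeartbeats 1000000

variable (K : Type*) [NontriviallyNormedField K] [IsAlgClosed K] [CompleteSpace K]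
  [IsUltrametricDist K]

/-- The degree of a rational function: max of degrees of numerator and denominator. -/
noncomputable def rdeg (h : RatFunc K) : ℕ := max h.num.natDegree h.denom.natDegree

/-- Canonical homogeneous coordinates of a point of `P^1(K) = K ∪ {∞}`. -/
noncomputable def homCoord : OnePoint K → K × K :=
  OnePoint.rec (1, 0) (fun a => (a, 1))

/-- The (normalized) chordal metric on `P^1(K)`:
`[z,w] = |z0*w1 - z1*w0| / (max(|z0|,|z1|) * max(|w0|,|w1|))`. -/
noncomputable def chordal (x y : OnePoint K) : ℝ :=
  ‖(homCoord K x).1 * (homCoord K y).2 - (homCoord K x).2 * (homCoord K y).1‖ /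
    (max ‖(homCoord K x).1‖ ‖(homCoord K x).2‖ * max ‖(homCoord K y).1‖ ‖(homCoord K y).2‖)

/-- The action of a rational function on the projective line `P^1(K) = K ∪ {∞}`. -/
noncomputable def evalP1 (h : RatFunc K) : OnePoint K → OnePoint K :=
  OnePoint.rec
    (if h.denom.natDegree < h.num.natDegree then OnePoint.infty
      else ((h.num.coeff h.denom.natDegree / h.denom.leadingCoeff : K) : OnePoint K))
    (fun a => if h.denom.eval a = 0 then OnePoint.infty
      else ((h.num.eval a / h.denom.eval a : K) : OnePoint K))

/-- Composition of rational functions. -/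
noncomputable def rcomp (f g : RatFunc K) : RatFunc K :=
  RatFunc.eval (algebraMap K (RatFunc K)) g f

/-- Iterates of a rational function, as rational functions. -/
noncomputable def riter (f : RatFunc K) : ℕ → RatFunc K
  | 0 => RatFunc.X
  | n + 1 => rcomp K f (riter f n)

lemma homCoord_infty : homCoord K OnePoint.infty = (1, 0) := rfl

lemma homCoord_coe (a : K) : homCoord K (a : OnePoint K) = (a, 1) := rfl

lemma evalP1_coe (h : RatFunc K) (a : K) :
    evalP1 K h (a : OnePoint K) =
      (if h.denom.eval a = 0 then OnePoint.infty
        else ((h.num.eval a / h.denom.eval a : K) : OnePoint K)) := rfl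

lemma one_le_den (x : OnePoint K) : 1 ≤ max ‖(homCoord K x).1‖ ‖(homCoord K x).2‖ := by
  induction x using OnePoint.rec with
  | infty => rw [homCoord_infty]; simp
  | coe a => rw [homCoord_coe]; simp

lemma den_pos (x : OnePoint K) : 0 < max ‖(homCoord K x).1‖ ‖(homCoord K x).2‖ :=
  lt_of_lt_of_le zero_lt_one (one_le_den K x)

lemma chordal_nonneg (x y : OnePoint K) : 0 ≤ chordal K x y :=
  div_nonneg (norm_nonneg _) (mul_nonneg (den_pos K x).le (den_pos K y).le)

lemma chordal_le_one (x y : OnePoint K) : chordal K x y ≤ 1 := by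
  rw [chordal, div_le_one (mul_pos (den_pos K x) (den_pos K y))]
  calc ‖(homCoord K x).1 * (homCoord K y).2 - (homCoord K x).2 * (homCoord K y).1‖
      ≤ max ‖(homCoord K x).1 * (homCoord K y).2‖ ‖(homCoord K x).2 * (homCoord K y).1‖ := by
        rw [sub_eq_add_neg]
        simpa using IsUltrametricDist.norm_add_le_max
          ((homCoord K x).1 * (homCoord K y).2) (-((homCoord K x).2 * (homCoord K y).1))
    _ ≤ max ‖(homCoord K x).1‖ ‖(homCoord K x).2‖ * max ‖(homCoord K y).1‖ ‖(homCoord K y).2‖ := by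
        rw [norm_mul, norm_mul]
        apply max_le
        · exact mul_le_mul (le_max_left _ _) (le_max_right _ _) (norm_nonneg _) (den_pos K x).le
        · exact mul_le_mul (le_max_right _ _) (le_max_left _ _) (norm_nonneg _) (den_pos K x).le

lemma chordal_comm (x y : OnePoint K) : chordal K x y = chordal K y x := by
  rw [chordal, chordal,
    show (homCoord K x).1 * (homCoord K y).2 - (homCoord K x).2 * (homCoord K y).1
      = -((homCoord K y).1 * (homCoord K x).2 - (homCoord K y).2 * (homCoord K x).1) by ring,
    norm_neg, mul_comm (max ‖(homCoord K x).1‖ ‖(homCoord K x).2‖)]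

lemma eq_of_chordal_eq_zero {x y : OnePoint K} (h : chordal K x y = 0) : x = y := by
  rw [chordal, _root_.div_eq_zero_iff] at h
  have h0 : (homCoord K x).1 * (homCoord K y).2 - (homCoord K x).2 * (homCoord K y).1 = 0 := by
    rcases h with h | h
    · exact norm_eq_zero.mp h
    · exact absurd h (ne_of_gt (mul_pos (den_pos K x) (den_pos K y)))
  rw [sub_eq_zero] at h0
  induction x using OnePoint.rec with
  | infty =>
    induction y using OnePoint.rec with
    | infty => rfl
    | coe b =>
      rw [homCoord_infty, homCoord_coe] at h0
      simp at h0
  | coe a =>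
    induction y using OnePoint.rec with
    | infty =>
      rw [homCoord_infty, homCoord_coe] at h0
      simp at h0
    | coe b =>
      rw [homCoord_coe, homCoord_coe] at h0
      simp at h0
      exact congrArg _ h0

lemma chordal_triangle (x y z : OnePoint K) :
    chordal K x z ≤ chordal K x y + chordal K y z := by
  set x0 := (homCoord K x).1 with hx0
  set x1 := (homCoord K x).2 with hx1
  set y0 := (homCoord K y).1 with hy0
  set y1 := (homCoord K y).2 with hy1
  set z0 := (homCoord K z).1 with hz0
  set z1 := (homCoord K z).2 with hz1
  have hMx : (0:ℝ) < max ‖x0‖ ‖x1‖ := den_pos K x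
  have hMy : (0:ℝ) < max ‖y0‖ ‖y1‖ := den_pos K y
  have hMz : (0:ℝ) < max ‖z0‖ ‖z1‖ := den_pos K z
  set cxz := x0 * z1 - x1 * z0 with hcxz
  set cxy := x0 * y1 - x1 * y0 with hcxy
  set cyz := y0 * z1 - y1 * z0 with hcyz
  have key : ‖cxz‖ * max ‖y0‖ ‖y1‖ ≤ ‖cxy‖ * max ‖z0‖ ‖z1‖ + ‖cyz‖ * max ‖x0‖ ‖x1‖ := by
    rcases max_choice ‖y0‖ ‖y1‖ with hm | hm <;> rw [hm]
    · have hid : y0 * cxz = cxy * z0 + cyz * x0 := by rw [hcxz, hcxy, hcyz]; ring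
      calc ‖cxz‖ * ‖y0‖ = ‖y0 * cxz‖ := by rw [norm_mul, mul_comm]
        _ ≤ ‖cxy * z0‖ + ‖cyz * x0‖ := by rw [hid]; exact norm_add_le _ _
        _ ≤ ‖cxy‖ * max ‖z0‖ ‖z1‖ + ‖cyz‖ * max ‖x0‖ ‖x1‖ := by
            rw [norm_mul, norm_mul]
            exact add_le_add
              (mul_le_mul_of_nonneg_left (le_max_left _ _) (norm_nonneg _))
              (mul_le_mul_of_nonneg_left (le_max_left _ _) (norm_nonneg _))
    · have hid : y1 * cxz = cxy * z1 + cyz * x1 := by rw [hcxz, hcxy, hcyz]; ring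
      calc ‖cxz‖ * ‖y1‖ = ‖y1 * cxz‖ := by rw [norm_mul, mul_comm]
        _ ≤ ‖cxy * z1‖ + ‖cyz * x1‖ := by rw [hid]; exact norm_add_le _ _
        _ ≤ ‖cxy‖ * max ‖z0‖ ‖z1‖ + ‖cyz‖ * max ‖x0‖ ‖x1‖ := by
            rw [norm_mul, norm_mul]
            exact add_le_add
              (mul_le_mul_of_nonneg_left (le_max_right _ _) (norm_nonneg _))
              (mul_le_mul_of_nonneg_left (le_max_right _ _) (norm_nonneg _))
  show ‖cxz‖ / (max ‖x0‖ ‖x1‖ * max ‖z0‖ ‖z1‖) ≤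
      ‖cxy‖ / (max ‖x0‖ ‖x1‖ * max ‖y0‖ ‖y1‖) + ‖cyz‖ / (max ‖y0‖ ‖y1‖ * max ‖z0‖ ‖z1‖)
  rw [div_add_div _ _ (by positivity) (by positivity),
    div_le_div_iff₀ (by positivity) (by positivity)]
  have h1 := mul_le_mul_of_nonneg_right key (le_of_lt (mul_pos hMx hMz))
  nlinarith [h1, norm_nonneg cxz, norm_nonneg cxy, norm_nonneg cyz, hMx, hMy, hMz,
    mul_pos hMx hMz, mul_pos hMx hMy, mul_pos hMy hMz]

/-- If a nonzero polynomial kills every `a : K` in the coe-part of a set, the set is finite. -/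
lemma finite_of_poly (s : Set (OnePoint K)) (p : K[X]) (hp : p ≠ 0)
    (h : ∀ a : K, (a : OnePoint K) ∈ s → p.eval a = 0) : s.Finite := by
  have hsub : s ⊆ insert OnePoint.infty
      ((fun a : K => (a : OnePoint K)) '' {a : K | p.IsRoot a}) := by
    intro x hx
    induction x using OnePoint.rec with
    | infty => exact Set.mem_insert _ _
    | coe a => exact Set.mem_insert_of_mem _ ⟨a, h a hx, rfl⟩
  exact Set.Finite.subset (Set.Finite.insert _ ((Polynomial.finite_setOf_isRoot hp).image _))
    hsub

lemma denom_not_dvd (g : RatFunc K) (hg : 0 < rdeg K g) (q : K[X]) (hq : q.natDegree = 0)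
    (h : g.num = q * g.denom) : False := by
  have hdvd : g.denom ∣ g.num := ⟨q, by rw [h, mul_comm]⟩
  have hu : IsUnit g.denom := (RatFunc.isCoprime_num_denom g).isUnit_of_dvd' hdvd dvd_rfl
  have h1 : g.denom.natDegree = 0 := natDegree_eq_zero_of_isUnit hu
  have h2 : g.num.natDegree = 0 := by
    rw [h]
    have := Polynomial.natDegree_mul_le (p := q) (q := g.denom)
    omega
  rw [rdeg, h1, h2] at hg
  simp at hg

lemma fiber_finite (g : RatFunc K) (hg : 0 < rdeg K g) (t : OnePoint K) :
    {x : OnePoint K | evalP1 K g x = t}.Finite := by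
  induction t using OnePoint.rec with
  | infty =>
    refine finite_of_poly K _ g.denom g.denom_ne_zero (fun a ha => ?_)
    by_contra hne
    rw [Set.mem_setOf_eq, evalP1_coe, if_neg hne] at ha
    exact OnePoint.coe_ne_infty _ ha
  | coe b =>
    refine finite_of_poly K _ (g.num - C b * g.denom) ?_ (fun a ha => ?_)
    · intro h0
      exact denom_not_dvd K g hg (C b) (natDegree_C b) (by linear_combination h0)
    · rw [Set.mem_setOf_eq, evalP1_coe] at ha
      by_cases hda : g.denom.eval a = 0
      · rw [if_pos hda] at ha
        exact absurd ha (OnePoint.infty_ne_coe _)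
      · rw [if_neg hda, OnePoint.coe_eq_coe, div_eq_iff hda] at ha
        simp [eval_sub, eval_mul, ha]

lemma fix_finite (f : RatFunc K) (hd : 1 < rdeg K f) :
    {x : OnePoint K | evalP1 K f x = x}.Finite := by
  refine finite_of_poly K _ (f.num - X * f.denom) ?_ (fun a ha => ?_)
  · intro h0
    have h : f.num = X * f.denom := by linear_combination h0
    have hdvd : f.denom ∣ f.num := ⟨X, by rw [h, mul_comm]⟩
    have hu : IsUnit f.denom := (RatFunc.isCoprime_num_denom f).isUnit_of_dvd' hdvd dvd_rfl
    have h1 : f.denom.natDegree = 0 := natDegree_eq_zero_of_isUnit hu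
    have h2 : f.num.natDegree ≤ 1 := by
      rw [h]
      have := Polynomial.natDegree_mul_le (p := (X : K[X])) (q := f.denom)
      have hX : (X : K[X]).natDegree = 1 := natDegree_X
      omega
    rw [rdeg, h1] at hd
    omega
  · rw [Set.mem_setOf_eq, evalP1_coe] at ha
    by_cases hda : f.denom.eval a = 0
    · rw [if_pos hda] at ha
      exact absurd ha (OnePoint.infty_ne_coe _)
    · rw [if_neg hda, OnePoint.coe_eq_coe, div_eq_iff hda] at ha
      simp [eval_sub, eval_mul, ha]

/-- For any `f` of degree `d > 1` and `g` of degree `> 0` (no good-reduction hypothesis),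
`limsup_{n→∞} (sup_{w ∈ P^1(K)} log [fⁿ(w), g(w)]) / (dⁿ + deg g) = 0`.
The `limsup ≤ 0` half is the trivial bound `[·,·] ≤ 1 ≤ exp (ε (dⁿ + deg g))`; the content is
the `limsup ≥ 0` half: for every `ε > 0`, frequently in `n` some `w ∈ P^1(K)` satisfies
`[fⁿ(w), g(w)] ≥ exp (-ε (dⁿ + deg g))`. -/
theorem limsup_sup_log_chordal_eq_zero (f g : RatFunc K)
    (hd : 1 < rdeg K f) (hg : 0 < rdeg K g) :
    (∀ ε : ℝ, 0 < ε → ∀ᶠ n : ℕ in atTop, ∀ w : OnePoint K,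
      chordal K ((evalP1 K f)^[n] w) (evalP1 K g w) ≤
        Real.exp (ε * ((rdeg K f : ℝ) ^ n + (rdeg K g : ℝ)))) ∧
    (∀ ε : ℝ, 0 < ε → ∃ᶠ n : ℕ in atTop, ∃ w : OnePoint K,
      Real.exp (-ε * ((rdeg K f : ℝ) ^ n + (rdeg K g : ℝ))) ≤
        chordal K ((evalP1 K f)^[n] w) (evalP1 K g w)) := by
  constructor
  · intro ε hε
    refine Eventually.of_forall fun n w => ?_
    refine le_trans (chordal_le_one K _ _) ?_
    have h0 : (0:ℝ) ≤ ε * ((rdeg K f : ℝ) ^ n + (rdeg K g : ℝ)) :=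
      mul_nonneg hε.le (add_nonneg (pow_nonneg (Nat.cast_nonneg _) n) (Nat.cast_nonneg _))
    exact Real.one_le_exp h0
  · intro ε hε
    by_contra hcon
    rw [Filter.not_frequently] at hcon
    simp only [not_exists, not_le] at hcon
    set φ := evalP1 K f with hφdef
    set G := evalP1 K g with hGdef
    set δ : ℕ → ℝ := fun n => Real.exp (-ε * ((rdeg K f : ℝ) ^ n + (rdeg K g : ℝ))) with hδdef
    have hδ0 : Tendsto δ atTop (nhds 0) := by
      have hd1 : (1:ℝ) < (rdeg K f : ℝ) := by exact_mod_cast hd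
      have h1 : Tendsto (fun n : ℕ => (rdeg K f : ℝ) ^ n) atTop atTop :=
        tendsto_pow_atTop_atTop_of_one_lt hd1
      have h2 : Tendsto (fun n : ℕ => (rdeg K f : ℝ) ^ n + (rdeg K g : ℝ)) atTop atTop :=
        tendsto_atTop_add_const_right _ _ h1
      have h3 : Tendsto (fun n : ℕ => -ε * ((rdeg K f : ℝ) ^ n + (rdeg K g : ℝ)))
          atTop atBot := h2.const_mul_atTop_of_neg (by linarith)
      exact Real.tendsto_exp_atBot.comp h3
    obtain ⟨N, hN⟩ := eventually_atTop.mp hcon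
    have hδ0' : Tendsto (fun n => δ (n + 1) + δ n) atTop (nhds 0) := by
      have h := (hδ0.comp (tendsto_add_atTop_nat 1)).add hδ0
      simpa using h
    have stepA : ∀ w, G (φ w) = G w := by
      intro w
      have hle : ∀ n ≥ N, chordal K (G w) (G (φ w)) ≤ δ (n + 1) + δ n := by
        intro n hn
        have h1 := hN (n + 1) (by omega) w
        have h2 := hN n hn (φ w)
        have e1 : φ^[n + 1] w = φ^[n] (φ w) := Function.iterate_succ_apply φ n w
        have t := chordal_triangle K (G w) (φ^[n + 1] w) (G (φ w))
        rw [chordal_comm K (G w) (φ^[n + 1] w)] at t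
        refine t.trans (add_le_add h1.le ?_)
        rw [e1]; exact (h2).le
      have hle0 : chordal K (G w) (G (φ w)) ≤ 0 :=
        ge_of_tendsto hδ0' (eventually_atTop.mpr ⟨N, fun n hn => hle n hn⟩)
      exact (eq_of_chordal_eq_zero K
        (le_antisymm hle0 (chordal_nonneg K _ _))).symm
    have stepB : ∀ w n, G (φ^[n] w) = G w := by
      intro w n
      induction n with
      | zero => simp
      | succ n ih => rw [Function.iterate_succ_apply', stepA, ih]
    have stepC : ∀ w, φ (G w) = G w := by
      intro w
      have hfib : {x : OnePoint K | G x = G w}.Finite := fiber_finite K g hg (G w)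
      obtain ⟨n, m, hnm, he⟩ :=
        Set.Finite.exists_lt_map_eq_of_forall_mem (f := fun n : ℕ => φ^[n] w)
          (fun n => stepB w n) hfib
      set p := m - n with hpdef
      have hp1 : 1 ≤ p := by omega
      have hper : ∀ k : ℕ, φ^[n + k * p] w = φ^[n] w := by
        intro k
        induction k with
        | zero => simp
        | succ k ih =>
          have harith : n + (k + 1) * p = p + (n + k * p) := by ring
          rw [harith, Function.iterate_add_apply, ih, ← Function.iterate_add_apply]
          have hpn : p + n = m := by omega
          rw [hpn, ← he]
      have hkey : ∀ j : ℕ, (∀ k : ℕ, φ^[j + k * p] w = φ^[j] w) → φ^[j] w = G w := by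
        intro j hj
        have hsub : Tendsto (fun k : ℕ => δ (j + k * p)) atTop (nhds 0) := by
          apply hδ0.comp
          apply tendsto_atTop_mono (fun k => ?_) tendsto_id
          have := Nat.le_mul_of_pos_right k (show 0 < p by omega)
          simp only [id_eq]
          omega
        have hle : ∀ᶠ k in atTop, chordal K (φ^[j] w) (G w) ≤ δ (j + k * p) := by
          filter_upwards [eventually_ge_atTop N] with k hk
          have hge : j + k * p ≥ N := by
            have := Nat.le_mul_of_pos_right k (show 0 < p by omega)
            omega
          have h := hN (j + k * p) hge w
          rw [hj k] at h
          exact h.le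
        have h0 : chordal K (φ^[j] w) (G w) ≤ 0 := ge_of_tendsto hsub hle
        exact eq_of_chordal_eq_zero K (le_antisymm h0 (chordal_nonneg K _ _))
      have h1 : φ^[n] w = G w := hkey n hper
      have h2 : φ^[n + 1] w = G w := by
        refine hkey (n + 1) (fun k => ?_)
        have harith : n + 1 + k * p = (n + k * p) + 1 := by omega
        rw [harith, Function.iterate_succ_apply', hper k]
        exact (Function.iterate_succ_apply' φ n w).symm
      rw [← h1]
      exact (Function.iterate_succ_apply' φ n w).symm.trans (h2.trans h1.symm)
    have hrfin : (Set.range G).Finite :=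
      (fix_finite K f hd).subset (by rintro x ⟨w, rfl⟩; exact stepC w)
    have huniv : (Set.univ : Set (OnePoint K)).Finite := by
      refine (Set.Finite.biUnion hrfin (fun y _ => fiber_finite K g hg y)).subset ?_
      intro x _
      exact Set.mem_biUnion ⟨x, rfl⟩ rfl
    exact Set.infinite_univ huniv
end

section
/- Let h ∈ K(z) be a rational function of degree e > 0 and let H = (H_0, H_1) be a non-degenerate homogeneous lift of h. Then there exist real constants C_1 ≤ C_2 such that for every Z ∈ K^2 \ {(0,0)}, C_1 ≤ log‖H(Z)‖ − e·log‖Z‖ ≤ C_2. -/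
open scoped Classical

open Polynomial Filter MeasureTheory Topology

variable (K : Type*) [NontriviallyNormedField K] [IsAlgClosed K] [CompleteSpace K]
  [IsUltrametricDist K]

/-- Evaluation of a two-variable polynomial at a point of `K²`. -/
noncomputable def pairEval (H : MvPolynomial (Fin 2) K) (Z : K × K) : K :=
  MvPolynomial.eval (fun i : Fin 2 => if i = 0 then Z.1 else Z.2) H

/-- The canonical projection `π : K² \ {0} → P^1(K)` (junk value `∞` at the origin). -/
noncomputable def projPt (Z : K × K) : OnePoint K :=
  if Z.2 = 0 then OnePoint.infty else ((Z.1 / Z.2 : K) : OnePoint K)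

/-- `H = (H₀, H₁)` is a non-degenerate homogeneous lift of the rational function `h` of
degree `e`: both coordinates are homogeneous of degree `e`, their only common zero in `K²`
is the origin, and `π ∘ H = h ∘ π` on `K² \ {0}`. -/
def IsLift (h : RatFunc K) (e : ℕ) (H : MvPolynomial (Fin 2) K × MvPolynomial (Fin 2) K) :
    Prop :=
  H.1.IsHomogeneous e ∧ H.2.IsHomogeneous e ∧
    (∀ Z : K × K, pairEval K H.1 Z = 0 → pairEval K H.2 Z = 0 → Z = 0) ∧
    ∀ Z : K × K, Z ≠ 0 →
      projPt K (pairEval K H.1 Z, pairEval K H.2 Z) = evalP1 K h (projPt K Z)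

/-- The self-map of `K²` induced by a pair of two-variable polynomials. -/
noncomputable def liftMap (H : MvPolynomial (Fin 2) K × MvPolynomial (Fin 2) K)
    (Z : K × K) : K × K :=
  (pairEval K H.1 Z, pairEval K H.2 Z)

/-- Composition of pairs of two-variable polynomials (substitution). -/
noncomputable def pairComp (H G : MvPolynomial (Fin 2) K × MvPolynomial (Fin 2) K) :
    MvPolynomial (Fin 2) K × MvPolynomial (Fin 2) K :=
  ((MvPolynomial.aeval (fun i : Fin 2 => if i = 0 then G.1 else G.2)) H.1,
   (MvPolynomial.aeval (fun i : Fin 2 => if i = 0 then G.1 else G.2)) H.2)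

/-- The `n`-fold composition of a pair of two-variable polynomials with itself. -/
noncomputable def pairPow (H : MvPolynomial (Fin 2) K × MvPolynomial (Fin 2) K) :
    ℕ → MvPolynomial (Fin 2) K × MvPolynomial (Fin 2) K
  | 0 => (MvPolynomial.X 0, MvPolynomial.X 1)
  | n + 1 => pairComp K H (pairPow H n)

/-- The linear form in `K[z₀, z₁]` vanishing exactly at a given point of `P^1(K)`:
`z₀ - a z₁` for `a ∈ K`, and `z₁` for `∞`. -/
noncomputable def linForm : OnePoint K → MvPolynomial (Fin 2) K :=
  OnePoint.rec (MvPolynomial.X 1)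
    (fun a => MvPolynomial.X 0 - MvPolynomial.C a * MvPolynomial.X 1)

/-!
By homogeneity, `H(cZ) = cᵉ H(Z)`, so both bounds reduce to the unit sphere `‖Z‖ = 1`. There the
upper bound is the triangle inequality. For the lower bound, the Nullstellensatz turns the absence
of nontrivial common zeros into identities `zᵢ ^ N = Aᵢ H₀ + Bᵢ H₁`; at a coordinate with
`‖zᵢ‖ = 1` this gives `1 ≤ C · max (‖H₀(Z)‖, ‖H₁(Z)‖)`, with `C` bounding `Aᵢ, Bᵢ` on the unit
polydisk.
-/

theorem Pi.norm_fin_two {E : Type*} [SeminormedAddGroup E] (v : Fin 2 → E) :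
    ‖v‖ = max ‖v 0‖ ‖v 1‖ :=
  le_antisymm
    ((pi_norm_le_iff_of_nonneg (by positivity)).2
      (Fin.forall_fin_two.2 ⟨le_max_left _ _, le_max_right _ _⟩))
    (max_le (norm_le_pi_norm v 0) (norm_le_pi_norm v 1))

theorem Real.log_sub_mul_log_mem_Icc {c C y t : ℝ} {n : ℕ} (hc : 0 < c) (ht : 0 < t)
    (hlow : c * t ^ n ≤ y) (hup : y ≤ C * t ^ n) :
    Real.log y - n * Real.log t ∈ Set.Icc (Real.log c) (Real.log C) := by
  have htn : 0 < t ^ n := pow_pos ht n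
  have hy : 0 < y := (mul_pos hc htn).trans_le hlow
  rw [← Real.log_pow, ← Real.log_div hy.ne' htn.ne']
  exact ⟨Real.log_le_log hc ((le_div_iff₀ htn).2 hlow),
    Real.log_le_log (div_pos hy htn) ((div_le_iff₀ htn).2 hup)⟩

theorem Pi.exists_eq_smul_of_ne_zero {σ 𝕜 : Type*} [NormedField 𝕜] [Fintype σ] {x : σ → 𝕜}
    (hx : x ≠ 0) : ∃ (c : 𝕜) (y : σ → 𝕜), ‖c‖ = ‖x‖ ∧ ‖y‖ = 1 ∧ x = c • y := by
  have : Nonempty σ := not_isEmpty_iff.mp fun _ => hx (Subsingleton.elim x 0)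
  obtain ⟨⟨i, hi : ‖x i‖ = ‖x‖⟩, -⟩ := IsGreatest.pi_norm x
  have hc : x i ≠ 0 := norm_ne_zero_iff.mp (hi ▸ norm_ne_zero_iff.mpr hx)
  refine ⟨x i, (x i)⁻¹ • x, hi, ?_, by rw [smul_inv_smul₀ hc]⟩
  rw [norm_smul, norm_inv, hi, inv_mul_cancel₀ (norm_ne_zero_iff.mpr hx)]

namespace MvPolynomial

variable {σ ι R 𝕜 : Type*}

theorem IsHomogeneous.eval_smul [CommSemiring R] {φ : MvPolynomial σ R} {n : ℕ}
    (hφ : φ.IsHomogeneous n) (c : R) (x : σ → R) :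
    eval (c • x) φ = c ^ n * eval x φ := by
  rw [eval_eq, eval_eq, Finset.mul_sum]
  refine Finset.sum_congr rfl fun d hd => ?_
  have hdeg : ∑ i ∈ d.support, d i = n := by
    simpa [Finsupp.weight, Finsupp.linearCombination, Finsupp.sum] using
      hφ (mem_support_iff.mp hd)
  simp only [Pi.smul_apply, smul_eq_mul, mul_pow, Finset.prod_mul_distrib,
    Finset.prod_pow_eq_pow_sum, hdeg]
  ring

theorem exists_norm_eval_le_of_forall_norm_le_one [SeminormedCommRing R] (φ : MvPolynomial σ R) :
    ∃ C, ∀ x : σ → R, (∀ i, ‖x i‖ ≤ 1) → ‖eval x φ‖ ≤ C := by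
  induction φ using MvPolynomial.induction_on with
  | C a => exact ⟨‖a‖, fun x _ => by rw [eval_C]⟩
  | add p q hp hq =>
    obtain ⟨Cp, hCp⟩ := hp
    obtain ⟨Cq, hCq⟩ := hq
    refine ⟨Cp + Cq, fun x hx => ?_⟩
    rw [eval_add]
    exact (norm_add_le _ _).trans (add_le_add (hCp x hx) (hCq x hx))
  | mul_X p i hp =>
    obtain ⟨Cp, hCp⟩ := hp
    refine ⟨Cp, fun x hx => ?_⟩
    rw [eval_mul, eval_X]
    calc ‖eval x p * x i‖ ≤ ‖eval x p‖ * ‖x i‖ := norm_mul_le _ _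
      _ ≤ ‖eval x p‖ := mul_le_of_le_one_right (norm_nonneg _) (hx i)
      _ ≤ Cp := hCp x hx

theorem exists_norm_pi_eval_le_of_norm_le_one [SeminormedCommRing R] [Fintype σ] [Fintype ι]
    (F : ι → MvPolynomial σ R) :
    ∃ C, ∀ x : σ → R, ‖x‖ ≤ 1 → ‖fun j => eval x (F j)‖ ≤ C := by
  choose C hC using fun j => exists_norm_eval_le_of_forall_norm_le_one (F j)
  refine ⟨∑ j, |C j|, fun x hx => (pi_norm_le_iff_of_nonneg (by positivity)).2 fun j => ?_⟩
  calc ‖eval x (F j)‖ ≤ C j := hC j x fun i => (norm_le_pi_norm x i).trans hx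
    _ ≤ |C j| := le_abs_self _
    _ ≤ ∑ j, |C j| := Finset.single_le_sum (fun j _ => abs_nonneg (C j)) (Finset.mem_univ j)

theorem exists_norm_eval_le_mul_of_mem_span [SeminormedCommRing R] [Fintype ι]
    {F : ι → MvPolynomial σ R} {φ : MvPolynomial σ R} (hφ : φ ∈ Ideal.span (Set.range F)) :
    ∃ C, ∀ x : σ → R, (∀ i, ‖x i‖ ≤ 1) → ‖eval x φ‖ ≤ C * ‖fun j => eval x (F j)‖ := by
  obtain ⟨a, rfl⟩ := Ideal.mem_span_range_iff_exists_fun.mp hφ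
  choose C hC using fun j => exists_norm_eval_le_of_forall_norm_le_one (a j)
  refine ⟨∑ j, C j, fun x hx => ?_⟩
  calc ‖eval x (∑ j, a j * F j)‖ = ‖∑ j, eval x (a j) * eval x (F j)‖ := by
        simp only [map_sum, eval_mul]
    _ ≤ ∑ j, ‖eval x (a j)‖ * ‖eval x (F j)‖ :=
        (norm_sum_le _ _).trans (Finset.sum_le_sum fun j _ => norm_mul_le _ _)
    _ ≤ ∑ j, C j * ‖fun j => eval x (F j)‖ := by
        gcongr with j
        · exact (norm_nonneg _).trans (hC j x hx)
        · exact hC j x hx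
        · exact norm_le_pi_norm (fun j => eval x (F j)) j
    _ = (∑ j, C j) * ‖fun j => eval x (F j)‖ := by rw [Finset.sum_mul]

theorem X_mem_radical_span_of_forall_eval_eq_zero [Field 𝕜] [IsAlgClosed 𝕜] [Finite σ]
    {F : ι → MvPolynomial σ 𝕜} (hF : ∀ x : σ → 𝕜, (∀ j, eval x (F j) = 0) → x = 0) (i : σ) :
    X i ∈ (Ideal.span (Set.range F)).radical := by
  rw [← vanishingIdeal_zeroLocus_eq_radical (K := 𝕜), mem_vanishingIdeal_iff]
  intro x hx
  have hx0 : x = 0 := hF x fun j => by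
    simpa using mem_zeroLocus_iff.mp hx (F j) (Ideal.subset_span ⟨j, rfl⟩)
  simp [hx0]

theorem exists_pos_le_norm_eval_of_norm_eq_one [NormedField 𝕜] [IsAlgClosed 𝕜] [Fintype σ]
    [Fintype ι] {F : ι → MvPolynomial σ 𝕜}
    (hF : ∀ x : σ → 𝕜, (∀ j, eval x (F j) = 0) → x = 0) :
    ∃ c > 0, ∀ x : σ → 𝕜, ‖x‖ = 1 → c ≤ ‖fun j => eval x (F j)‖ := by
  have hcoord : ∀ i, ∃ N C, ∀ x : σ → 𝕜, (∀ k, ‖x k‖ ≤ 1) →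
      ‖x i‖ ^ N ≤ C * ‖fun j => eval x (F j)‖ := fun i => by
    obtain ⟨N, hN⟩ := X_mem_radical_span_of_forall_eval_eq_zero hF i
    obtain ⟨C, hC⟩ := exists_norm_eval_le_mul_of_mem_span hN
    exact ⟨N, C, fun x hx => by simpa using hC x hx⟩
  choose N C hC using hcoord
  refine ⟨(∑ i, |C i| + 1)⁻¹, by positivity, fun x hx => ?_⟩
  have : Nonempty σ := not_isEmpty_iff.mp fun _ => by simp [Subsingleton.elim x 0] at hx
  obtain ⟨⟨i, hi : ‖x i‖ = ‖x‖⟩, -⟩ := IsGreatest.pi_norm x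
  rw [inv_le_iff_one_le_mul₀' (by positivity)]
  calc (1 : ℝ) = ‖x i‖ ^ N i := by rw [hi, hx, one_pow]
    _ ≤ C i * ‖fun j => eval x (F j)‖ := hC i x fun k => hx ▸ norm_le_pi_norm x k
    _ ≤ (∑ i, |C i| + 1) * ‖fun j => eval x (F j)‖ := by
        gcongr
        calc C i ≤ |C i| := le_abs_self _
          _ ≤ ∑ i, |C i| := Finset.single_le_sum (fun i _ => abs_nonneg (C i)) (Finset.mem_univ i)
          _ ≤ ∑ i, |C i| + 1 := le_add_of_nonneg_right zero_le_one

theorem norm_eval_smul [NormedField 𝕜] [Fintype ι] {F : ι → MvPolynomial σ 𝕜} {n : ℕ}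
    (hF : ∀ j, (F j).IsHomogeneous n) (c : 𝕜) (x : σ → 𝕜) :
    ‖fun j => eval (c • x) (F j)‖ = ‖c‖ ^ n * ‖fun j => eval x (F j)‖ := by
  simp_rw [(hF _).eval_smul]
  rw [← norm_pow, ← norm_smul]
  rfl

theorem exists_bounds_norm_eval_of_isHomogeneous [NormedField 𝕜] [IsAlgClosed 𝕜] [Fintype σ]
    [Fintype ι]
    {F : ι → MvPolynomial σ 𝕜} {n : ℕ} (hhom : ∀ j, (F j).IsHomogeneous n)
    (hF : ∀ x : σ → 𝕜, (∀ j, eval x (F j) = 0) → x = 0) :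
    ∃ c C : ℝ, 0 < c ∧ ∀ x : σ → 𝕜, x ≠ 0 →
      c * ‖x‖ ^ n ≤ ‖fun j => eval x (F j)‖ ∧ ‖fun j => eval x (F j)‖ ≤ C * ‖x‖ ^ n := by
  obtain ⟨c, hc, hlow⟩ := exists_pos_le_norm_eval_of_norm_eq_one hF
  obtain ⟨C, hup⟩ := exists_norm_pi_eval_le_of_norm_le_one F
  refine ⟨c, C, hc, fun x hx => ?_⟩
  obtain ⟨a, y, ha, hy, rfl⟩ := Pi.exists_eq_smul_of_ne_zero hx
  rw [norm_eval_smul hhom, ← ha, mul_comm c, mul_comm C]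
  exact ⟨by gcongr; exact hlow y hy, by gcongr; exact hup y hy.le⟩

end MvPolynomial

theorem lift_log_norm_bounded (h : RatFunc K) (e : ℕ)
    (H : MvPolynomial (Fin 2) K × MvPolynomial (Fin 2) K) (hH : IsLift K h e H) :
    ∃ C₁ C₂ : ℝ, C₁ ≤ C₂ ∧ ∀ Z : K × K, Z ≠ 0 →
      C₁ ≤ Real.log (max ‖(liftMap K H Z).1‖ ‖(liftMap K H Z).2‖) -
          (e : ℝ) * Real.log (max ‖Z.1‖ ‖Z.2‖) ∧
        Real.log (max ‖(liftMap K H Z).1‖ ‖(liftMap K H Z).2‖) -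
          (e : ℝ) * Real.log (max ‖Z.1‖ ‖Z.2‖) ≤ C₂ := by
  obtain ⟨hH₁, hH₂, hzero, -⟩ := hH
  let F : Fin 2 → MvPolynomial (Fin 2) K := ![H.1, H.2]
  -- `pairEval K P Z` is by definition `eval (coords Z) P`
  let coords (Z : K × K) : Fin 2 → K := fun i => if i = 0 then Z.1 else Z.2
  have hcoords (x : Fin 2 → K) : coords (x 0, x 1) = x := funext (Fin.forall_fin_two.2 ⟨rfl, rfl⟩)
  have hF (x : Fin 2 → K) (hx : ∀ j, MvPolynomial.eval x (F j) = 0) : x = 0 := by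
    have h0 : (x 0, x 1) = 0 := hzero (x 0, x 1)
      (by show MvPolynomial.eval (coords _) H.1 = 0; rw [hcoords]; exact hx 0)
      (by show MvPolynomial.eval (coords _) H.2 = 0; rw [hcoords]; exact hx 1)
    exact funext (Fin.forall_fin_two.2 ⟨congrArg Prod.fst h0, congrArg Prod.snd h0⟩)
  obtain ⟨c, C, hc, hbound⟩ := MvPolynomial.exists_bounds_norm_eval_of_isHomogeneous
    (Fin.forall_fin_two.2 ⟨hH₁, hH₂⟩ : ∀ j, (F j).IsHomogeneous e) hF
  refine ⟨min (Real.log c) (Real.log C), max (Real.log c) (Real.log C), min_le_max,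
    fun Z hZ => ?_⟩
  have hx : coords Z ≠ 0 := fun h0 => hZ (Prod.ext (congrFun h0 0) (congrFun h0 1))
  obtain ⟨hlow, hup⟩ := hbound (coords Z) hx
  obtain ⟨h₁, h₂⟩ := Real.log_sub_mul_log_mem_Icc hc (norm_pos_iff.mpr hx) hlow hup
  simp only [Pi.norm_fin_two] at h₁ h₂
  exact ⟨(min_le_left _ _).trans h₁, h₂.trans (le_max_right _ _)⟩
end

section
/- Let f ∈ K(z) be a rational function of degree d > 1 and let F be a non-degenerate homogeneous lift of f. Then the sequence of functions Z ↦ d^{-n}·(log‖F^n(Z)‖ − d^n·log‖Z‖), n ∈ ℕ, converges uniformly on K^2 \ {(0,0)} as n → ∞ (the limit is the dynamical Green function of F), where F^n denotes the n-fold composition of F. -/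
open scoped Classical

open Polynomial Filter MeasureTheory Topology

variable (K : Type*) [NontriviallyNormedField K] [IsAlgClosed K] [CompleteSpace K]
  [IsUltrametricDist K]

/-! The estimate behind the convergence is that `log ‖F Z‖ - d log ‖Z‖` is bounded on
`K² \ {0}`. From above this is the triangle inequality on the monomials of `F`; from below it
is the Nullstellensatz: since `F₀, F₁` have no common zero but the origin, each `z_i ^ (m + d)`
is a combination `a F₀ + b F₁` with `a, b` homogeneous of degree `m`, so
`‖Z‖ ^ (m + d) ≤ C ‖Z‖ ^ m ‖F Z‖`. The `n`-th function of the sequence then telescopes into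
`∑_{k<n} d^{-(k+1)} (log ‖F^{k+1} Z‖ - d log ‖F^k Z‖)`, whose terms are uniformly
`O(d^{-k})`, so it converges uniformly. -/

namespace MvPolynomial

variable {σ : Type*}

theorem homogeneousComponent_add_mul_of_isHomogeneous {R : Type*} [CommSemiring R]
    {F : MvPolynomial σ R} {d : ℕ} (hF : F.IsHomogeneous d) (k : ℕ) (a : MvPolynomial σ R) :
    homogeneousComponent (k + d) (a * F) = homogeneousComponent k a * F := by
  induction a using MvPolynomial.induction_on' with
  | monomial u c =>
    rw [homogeneousComponent_of_mem ((isHomogeneous_monomial c rfl).mul hF),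
      homogeneousComponent_of_mem (isHomogeneous_monomial c rfl)]
    by_cases h : k = u.degree <;> simp [h]
  | add a b ha hb => simp only [add_mul, map_add, ha, hb]

theorem exists_isHomogeneous_mul_add_mul_eq_X_pow {R : Type*} [CommSemiring R]
    {F₁ F₂ : MvPolynomial σ R} {d : ℕ} (h₁ : F₁.IsHomogeneous d) (h₂ : F₂.IsHomogeneous d)
    {i : σ} {n : ℕ} (hn : X i ^ n ∈ Ideal.span {F₁, F₂}) :
    ∃ a b : MvPolynomial σ R, a.IsHomogeneous n ∧ b.IsHomogeneous n ∧
      a * F₁ + b * F₂ = X i ^ (n + d) := by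
  obtain ⟨a, b, hab⟩ := Ideal.mem_span_pair.mp hn
  -- multiplying by `X i ^ d` first makes the degree-`(n + d)` components of both sides match
  refine ⟨homogeneousComponent n (X i ^ d * a), homogeneousComponent n (X i ^ d * b),
    homogeneousComponent_isHomogeneous _ _, homogeneousComponent_isHomogeneous _ _, ?_⟩
  rw [← homogeneousComponent_add_mul_of_isHomogeneous h₁,
    ← homogeneousComponent_add_mul_of_isHomogeneous h₂, ← map_add, mul_assoc, mul_assoc,
    ← mul_add, hab, ← pow_add, add_comm d,
    homogeneousComponent_eq_self (by simpa using (isHomogeneous_X R i).pow (n + d))]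

theorem norm_eval_le_of_isHomogeneous {𝕜 : Type*} [NormedField 𝕜] [Fintype σ]
    {P : MvPolynomial σ 𝕜} {e : ℕ} (hP : P.IsHomogeneous e) (x : σ → 𝕜) :
    ‖eval x P‖ ≤ (∑ u ∈ P.support, ‖coeff u P‖) * ‖x‖ ^ e := by
  rw [eval_eq', Finset.sum_mul]
  refine (norm_sum_le _ _).trans (Finset.sum_le_sum fun u hu => ?_)
  rw [norm_mul]
  gcongr
  calc ‖∏ i, x i ^ u i‖ = ∏ i, ‖x i‖ ^ u i := by simp [norm_prod, norm_pow]
    _ ≤ ∏ i, ‖x‖ ^ u i := by gcongr; exact norm_le_pi_norm x _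
    _ = ‖x‖ ^ e := by
      rw [Finset.prod_pow_eq_pow_sum, ← Finsupp.degree_eq_sum, Finsupp.degree_eq_weight_one]
      exact congrArg _ (hP (mem_support_iff.mp hu))

theorem exists_X_pow_mem_of_zeroLocus_subset {k : Type*} [Field k] [IsAlgClosed k] [Finite σ]
    {I : Ideal (MvPolynomial σ k)} (hI : zeroLocus k I ⊆ {0}) (i : σ) :
    ∃ m : ℕ, X i ^ m ∈ I := by
  have hX : X i ∈ vanishingIdeal k (zeroLocus k I) := fun x hx => by
    rw [Set.mem_singleton_iff.mp (hI hx)]; simp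
  rwa [vanishingIdeal_zeroLocus_eq_radical] at hX

end MvPolynomial

theorem exists_tendstoUniformlyOn_inv_pow_mul_iterate_sub {α : Type*} {T : α → α} {φ : α → ℝ}
    {s : Set α} {d M : ℝ} (hd : 1 < d) (hT : Set.MapsTo T s s)
    (hM : ∀ x ∈ s, |φ (T x) - d * φ x| ≤ M) :
    ∃ G : α → ℝ, TendstoUniformlyOn (fun n x => (d ^ n)⁻¹ * (φ (T^[n] x) - d ^ n * φ x))
      G atTop s := by
  have hd₀ : 0 < d := zero_lt_one.trans hd
  set u : ℕ → α → ℝ := fun k x => (d ^ (k + 1))⁻¹ * φ (T^[k + 1] x) - (d ^ k)⁻¹ * φ (T^[k] x)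
  have hu : ∀ k, ∀ x ∈ s, ‖u k x‖ ≤ M * d⁻¹ * d⁻¹ ^ k := by
    intro k x hx
    have hstep : u k x = (d ^ (k + 1))⁻¹ * (φ (T (T^[k] x)) - d * φ (T^[k] x)) := by
      simp only [u, Function.iterate_succ_apply']
      field_simp
      ring
    rw [hstep, norm_mul, Real.norm_eq_abs, Real.norm_eq_abs, abs_inv, abs_pow, abs_of_pos hd₀]
    calc (d ^ (k + 1))⁻¹ * |φ (T (T^[k] x)) - d * φ (T^[k] x)|
        ≤ (d ^ (k + 1))⁻¹ * M := by gcongr; exact hM _ (hT.iterate k hx)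
      _ = M * d⁻¹ * d⁻¹ ^ k := by rw [pow_succ, mul_inv, inv_pow]; ring
  have hsum : Summable fun k : ℕ => M * d⁻¹ * d⁻¹ ^ k :=
    (summable_geometric_of_lt_one (by positivity) (inv_lt_one_of_one_lt₀ hd)).mul_left _
  refine ⟨_, (tendstoUniformlyOn_tsum_nat hsum hu).congr (Eventually.of_forall fun n x _ => ?_)⟩
  simp only [u]
  rw [Finset.sum_range_sub (fun k => (d ^ k)⁻¹ * φ (T^[k] x))]
  field_simp
  simp

section HomogeneousLift

open MvPolynomial

variable {𝕜 : Type*} [NontriviallyNormedField 𝕜]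
  {F : MvPolynomial (Fin 2) 𝕜 × MvPolynomial (Fin 2) 𝕜} {d : ℕ}

theorem norm_pairEval_le {P : MvPolynomial (Fin 2) 𝕜} {e : ℕ} (hP : P.IsHomogeneous e)
    (Z : 𝕜 × 𝕜) : ‖pairEval 𝕜 P Z‖ ≤ (∑ u ∈ P.support, ‖coeff u P‖) * ‖Z‖ ^ e := by
  have hZ : ‖fun i : Fin 2 => if i = 0 then Z.1 else Z.2‖ ≤ ‖Z‖ :=
    (pi_norm_le_iff_of_nonneg (norm_nonneg Z)).2 fun i => by
      split_ifs
      exacts [norm_fst_le Z, norm_snd_le Z]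
  exact (norm_eval_le_of_isHomogeneous hP _).trans (by gcongr)

theorem exists_norm_liftMap_le (h₁ : F.1.IsHomogeneous d) (h₂ : F.2.IsHomogeneous d) :
    ∃ C : ℝ, ∀ Z, ‖liftMap 𝕜 F Z‖ ≤ C * ‖Z‖ ^ d :=
  ⟨max (∑ u ∈ F.1.support, ‖coeff u F.1‖) (∑ u ∈ F.2.support, ‖coeff u F.2‖), fun Z =>
    max_le ((norm_pairEval_le h₁ Z).trans (by gcongr; exact le_max_left _ _))
      ((norm_pairEval_le h₂ Z).trans (by gcongr; exact le_max_right _ _))⟩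

theorem zeroLocus_span_pair_subset
    (hF : ∀ Z : 𝕜 × 𝕜, pairEval 𝕜 F.1 Z = 0 → pairEval 𝕜 F.2 Z = 0 → Z = 0) :
    zeroLocus 𝕜 (Ideal.span {F.1, F.2}) ⊆ {0} := by
  intro x hx
  have hx' : (fun i : Fin 2 => if i = 0 then x 0 else x 1) = x := by
    funext i; fin_cases i <;> rfl
  have h0 := hF (x 0, x 1) (by simpa [pairEval, hx'] using hx F.1 (Ideal.subset_span (by simp)))
    (by simpa [pairEval, hx'] using hx F.2 (Ideal.subset_span (by simp)))
  rw [← hx', Set.mem_singleton_iff]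
  funext i
  fin_cases i
  exacts [congrArg Prod.fst h0, congrArg Prod.snd h0]

theorem exists_pow_norm_le_mul_norm_liftMap [IsAlgClosed 𝕜] (h₁ : F.1.IsHomogeneous d)
    (h₂ : F.2.IsHomogeneous d)
    (hF : ∀ Z : 𝕜 × 𝕜, pairEval 𝕜 F.1 Z = 0 → pairEval 𝕜 F.2 Z = 0 → Z = 0) :
    ∃ C : ℝ, ∀ Z : 𝕜 × 𝕜, Z ≠ 0 → ‖Z‖ ^ d ≤ C * ‖liftMap 𝕜 F Z‖ := by
  have hcoord : ∀ i : Fin 2, ∃ C : ℝ, ∀ Z : 𝕜 × 𝕜, Z ≠ 0 →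
      ‖pairEval 𝕜 (X i) Z‖ = ‖Z‖ → ‖Z‖ ^ d ≤ C * ‖liftMap 𝕜 F Z‖ := by
    intro i
    obtain ⟨m, hm⟩ := exists_X_pow_mem_of_zeroLocus_subset (zeroLocus_span_pair_subset hF) i
    obtain ⟨a, b, ha, hb, hab⟩ := exists_isHomogeneous_mul_add_mul_eq_X_pow h₁ h₂ hm
    set A := ∑ u ∈ a.support, ‖coeff u a‖
    set B := ∑ u ∈ b.support, ‖coeff u b‖
    refine ⟨A + B, fun Z hZ hi => le_of_mul_le_mul_left ?_ (pow_pos (norm_pos_iff.2 hZ) m)⟩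
    calc ‖Z‖ ^ m * ‖Z‖ ^ d = ‖pairEval 𝕜 (a * F.1 + b * F.2) Z‖ := by
          rw [hab, ← pow_add, ← hi, ← norm_pow, pairEval, pairEval, map_pow]
      _ ≤ ‖pairEval 𝕜 a Z‖ * ‖pairEval 𝕜 F.1 Z‖ + ‖pairEval 𝕜 b Z‖ * ‖pairEval 𝕜 F.2 Z‖ := by
          simp only [pairEval, map_add, map_mul, ← norm_mul]
          exact norm_add_le _ _
      _ ≤ A * ‖Z‖ ^ m * ‖liftMap 𝕜 F Z‖ + B * ‖Z‖ ^ m * ‖liftMap 𝕜 F Z‖ := by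
          gcongr
          exacts [norm_pairEval_le ha Z, norm_fst_le (liftMap 𝕜 F Z), norm_pairEval_le hb Z,
            norm_snd_le (liftMap 𝕜 F Z)]
      _ = ‖Z‖ ^ m * ((A + B) * ‖liftMap 𝕜 F Z‖) := by ring
  obtain ⟨C₀, hC₀⟩ := hcoord 0
  obtain ⟨C₁, hC₁⟩ := hcoord 1
  refine ⟨max C₀ C₁, fun Z hZ => ?_⟩
  rcases max_choice ‖Z.1‖ ‖Z.2‖ with h | h
  · exact (hC₀ Z hZ (by rw [Prod.norm_def, h]; simp [pairEval])).trans
      (by gcongr; exact le_max_left _ _)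
  · exact (hC₁ Z hZ (by rw [Prod.norm_def, h]; simp [pairEval])).trans
      (by gcongr; exact le_max_right _ _)

theorem mapsTo_liftMap
    (hF : ∀ Z : 𝕜 × 𝕜, pairEval 𝕜 F.1 Z = 0 → pairEval 𝕜 F.2 Z = 0 → Z = 0) :
    Set.MapsTo (liftMap 𝕜 F) {Z | Z ≠ 0} {Z | Z ≠ 0} :=
  fun Z hZ h => hZ (hF Z (congrArg Prod.fst h) (congrArg Prod.snd h))

theorem exists_abs_log_norm_liftMap_sub_le [IsAlgClosed 𝕜] (h₁ : F.1.IsHomogeneous d)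
    (h₂ : F.2.IsHomogeneous d)
    (hF : ∀ Z : 𝕜 × 𝕜, pairEval 𝕜 F.1 Z = 0 → pairEval 𝕜 F.2 Z = 0 → Z = 0) :
    ∃ M : ℝ, ∀ Z : 𝕜 × 𝕜, Z ≠ 0 → |Real.log ‖liftMap 𝕜 F Z‖ - d * Real.log ‖Z‖| ≤ M := by
  obtain ⟨C, hC⟩ := exists_norm_liftMap_le h₁ h₂
  obtain ⟨c, hc⟩ := exists_pow_norm_le_mul_norm_liftMap h₁ h₂ hF
  refine ⟨max (Real.log C) (Real.log c), fun Z hZ => ?_⟩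
  have hZd : 0 < ‖Z‖ ^ d := pow_pos (norm_pos_iff.2 hZ) d
  have hFZ : 0 < ‖liftMap 𝕜 F Z‖ := norm_pos_iff.2 (mapsTo_liftMap hF hZ)
  have hC₀ : 0 < C := pos_of_mul_pos_left (hFZ.trans_le (hC Z)) hZd.le
  have hc₀ : 0 < c := pos_of_mul_pos_left (hZd.trans_le (hc Z hZ)) hFZ.le
  have hlogC := Real.log_le_log hFZ (hC Z)
  have hlogc := Real.log_le_log hZd (hc Z hZ)
  rw [Real.log_mul hC₀.ne' hZd.ne', Real.log_pow] at hlogC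
  rw [Real.log_mul hc₀.ne' hFZ.ne', Real.log_pow] at hlogc
  exact abs_le.2 ⟨by linarith [le_max_right (Real.log C) (Real.log c)],
    by linarith [le_max_left (Real.log C) (Real.log c)]⟩

end HomogeneousLift

theorem green_function_uniform_convergence (f : RatFunc K) (d : ℕ) (hd : 1 < d)
    (F : MvPolynomial (Fin 2) K × MvPolynomial (Fin 2) K) (hF : IsLift K f d F) :
    ∃ G : K × K → ℝ,
      TendstoUniformlyOn
        (fun (n : ℕ) (Z : K × K) =>
          ((d : ℝ) ^ n)⁻¹ *
            (Real.log (max ‖((liftMap K F)^[n] Z).1‖ ‖((liftMap K F)^[n] Z).2‖) -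
              (d : ℝ) ^ n * Real.log (max ‖Z.1‖ ‖Z.2‖)))
        G atTop {Z : K × K | Z ≠ 0} := by
  obtain ⟨h₁, h₂, hF, -⟩ := hF
  obtain ⟨M, hM⟩ := exists_abs_log_norm_liftMap_sub_le h₁ h₂ hF
  exact exists_tendstoUniformlyOn_inv_pow_mul_iterate_sub (φ := fun Z : K × K => Real.log ‖Z‖)
    (by exact_mod_cast hd) (mapsTo_liftMap hF) hM
end
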